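/- Suppose t = 0, i.e., m = m1 + m2. If m1 ≤ (1−p)²m2/4 or m2 ≤ (1−p)²m1/4, the game has a unique extreme pure Nash equilibrium with x1* = 0 or x2* = 0, respectively. Otherwise, the unique pure Nash equilibrium is (x1*, x2*) = ( √(m1·m2)·(2√m1 − (1−p)√m2) / ((1+p)(√m1 + √m2)), √(m1·m2)·(2√m2 − (1−p)√m1) / ((1+p)(√m1 + √m2)) ); in this case x1* + x2* = √(m1·m2) ≤ (m1 + m2)/2, with equality if and only if m1 = m2 = m/2. -/

import Mathlib

/-- Average reward of pool 1 in the two-player miner's dilemma with betrayal,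
where the total mining power is `m1 + m2 + t`. -/
noncomputable def r1 (m1 m2 t p x1 x2 : ℝ) : ℝ :=
  (m1*m2 + m1*x1 + p*m2*x2 - (1-p)*x1^2 - (1-p)*x1*x2) /
    (((m1+m2+t) - (1-p)*(x1+x2)) * (m1*m2 + m1*x1 + m2*x2))

/-- Average reward of pool 2. -/
noncomputable def r2 (m1 m2 t p x1 x2 : ℝ) : ℝ :=
  (m1*m2 + m2*x2 + p*m1*x1 - (1-p)*x2^2 - (1-p)*x1*x2) /
    (((m1+m2+t) - (1-p)*(x1+x2)) * (m1*m2 + m1*x1 + m2*x2))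

/-- `(x1, x2)` is a pure Nash equilibrium of the two-player miner's dilemma game. -/
noncomputable def IsNash (m1 m2 t p x1 x2 : ℝ) : Prop :=
  x1 ∈ Set.Icc 0 m1 ∧ x2 ∈ Set.Icc 0 m2 ∧
  (∀ x ∈ Set.Icc (0:ℝ) m1, r1 m1 m2 t p x x2 ≤ r1 m1 m2 t p x1 x2) ∧
  (∀ x ∈ Set.Icc (0:ℝ) m2, r2 m1 m2 t p x1 x ≤ r2 m1 m2 t p x1 x2)

/-!
For fixed `y`, `r1 x y - r1 b y` equals, up to a positive factor,
`marginal b y * (x - b) - curvature b y * (x - b)^2` with `curvature ≥ 0`. Hence best responses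
are exactly the points satisfying the first-order (KKT) conditions on `[0, m1]`, and full attack
`x1 = m1` is never one. The two marginals add up to `((1-p)(y1+y2) - m)((y1+y2)^2 - m1 m2)`, so
an interior equilibrium has `y1 + y2 = √(m1 m2)`; on that line player 1's condition factors and
leaves only the stated point, which is interior iff `(1-p)^2 m2 < 4 m1` and `(1-p)^2 m1 < 4 m2`.
At a boundary equilibrium `(0, y)`, player 2's condition makes `y` the positive root of
`p y^2 + 2 m1 y = m1 m2`, and there player 1's marginal at `0` has the sign of `4 m1 - (1-p)^2 m2`.
-/

open Set Filter Topology

-- Up to the positive factor `(1-p) m2 / D²`, `D` the denominator of `r1` (at `t = 0`),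
-- this is `∂r1/∂x1` at `(x, y)`.
noncomputable def marginal (m1 m2 p x y : ℝ) : ℝ :=
  ((1-p)*y - p*m1)*x^2 - 2*(m1*m2 + m2*y - (1-p)*y^2)*x
    + ((1-p)*y^3 - m2*(1-p)*y^2 - m1*y^2 + m1^2*m2 + m1*m2*(1+p)*y)

noncomputable def curvature (m1 m2 p b y : ℝ) : ℝ :=
  (m2 - (1-p)*y)*(m1+y) + (1-p)*y*(m1-b) + p*m1*b

theorem r2_eq_r1 (m1 m2 p x1 x2 : ℝ) : r2 m1 m2 0 p x1 x2 = r1 m2 m1 0 p x2 x1 := by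
  simp only [r1, r2]; ring_nf

theorem isNash_comm {m1 m2 p x1 x2 : ℝ} : IsNash m1 m2 0 p x1 x2 ↔ IsNash m2 m1 0 p x2 x1 := by
  simp only [IsNash, r2_eq_r1]
  tauto

theorem nonpos_of_eventually_le_mul {c A : ℝ} (h : ∀ᶠ ε in 𝓝[>] (0:ℝ), c ≤ A * ε) : c ≤ 0 := by
  have hlim : Tendsto (fun ε => A * ε) (𝓝[>] 0) (𝓝 0) := by
    simpa using ((continuous_const_mul A).tendsto 0).mono_left nhdsWithin_le_nhds
  exact ge_of_tendsto hlim h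

section BestResponse

variable {m1 m2 p b y : ℝ}

theorem r1_le_r1_iff {x : ℝ} (hm1 : 0 < m1) (hm2 : 0 < m2) (hp1 : p < 1) (hx : 0 ≤ x)
    (hb : 0 ≤ b) (hy : 0 ≤ y) (hDx : (1-p)*(x+y) < m1+m2) (hDb : (1-p)*(b+y) < m1+m2) :
    r1 m1 m2 0 p x y ≤ r1 m1 m2 0 p b y ↔
      marginal m1 m2 p b y * (x - b) ≤ curvature m1 m2 p b y * (x-b)^2 := by
  have hq : 0 < 1 - p := sub_pos.2 hp1
  have hDx' : 0 < (m1+m2+0 - (1-p)*(x+y)) * (m1*m2 + m1*x + m2*y) := by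
    apply mul_pos <;> nlinarith [mul_pos hm1 hm2]
  have hDb' : 0 < (m1+m2+0 - (1-p)*(b+y)) * (m1*m2 + m1*b + m2*y) := by
    apply mul_pos <;> nlinarith [mul_pos hm1 hm2]
  rw [r1, r1, div_le_div_iff₀ hDx' hDb', ← sub_nonneg]
  conv_rhs => rw [← sub_nonneg, ← mul_nonneg_iff_of_pos_left (mul_pos hq hm2)]
  apply Iff.of_eq
  congr 1
  unfold marginal curvature
  ring

theorem r1_le_of_marginal_mul_nonpos (hm1 : 0 < m1) (hm2 : 0 < m2) (hp0 : 0 ≤ p) (hp1 : p < 1)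
    (hb : b ∈ Icc 0 m1) (hy : 0 ≤ y) (hym : (1-p)*y < m2)
    (hG : ∀ x ∈ Icc 0 m1, marginal m1 m2 p b y * (x - b) ≤ 0) :
    ∀ x ∈ Icc 0 m1, r1 m1 m2 0 p x y ≤ r1 m1 m2 0 p b y := by
  intro x hx
  have hD : ∀ z ∈ Icc 0 m1, (1-p)*(z+y) < m1+m2 := fun z hz => by nlinarith [hz.1, hz.2]
  rw [r1_le_r1_iff hm1 hm2 hp1 hx.1 hb.1 hy (hD x hx) (hD b hb)]
  have hQ : 0 ≤ curvature m1 m2 p b y := by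
    have := hb.1
    have := sub_nonneg.2 hb.2
    have := sub_nonneg.2 hp1.le
    unfold curvature
    positivity
  exact (hG x hx).trans (mul_nonneg hQ (sq_nonneg _))

theorem marginal_nonneg_of_forall_r1_le (hm1 : 0 < m1) (hm2 : 0 < m2) (hp1 : p < 1)
    (hb : 0 < b) (hy : 0 ≤ y) (hD : (1-p)*(b+y) < m1+m2) (hbm : b ≤ m1)
    (hbr : ∀ x ∈ Icc 0 m1, r1 m1 m2 0 p x y ≤ r1 m1 m2 0 p b y) :
    0 ≤ marginal m1 m2 p b y := by
  have hq : 0 < 1 - p := sub_pos.2 hp1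
  rw [← neg_nonpos]
  refine nonpos_of_eventually_le_mul (A := curvature m1 m2 p b y) ?_
  filter_upwards [Ioo_mem_nhdsGT hb] with ε ⟨hε, hεb⟩
  have hDε : (1-p)*(b - ε + y) < m1+m2 := by nlinarith
  have h := (r1_le_r1_iff hm1 hm2 hp1 (by linarith) hb.le hy hDε hD).1
    (hbr _ ⟨by linarith, by linarith⟩)
  exact le_of_mul_le_mul_right (by linear_combination h) hε

theorem marginal_nonpos_of_forall_r1_le (hm1 : 0 < m1) (hm2 : 0 < m2) (hp1 : p < 1)
    (hb : b ∈ Ico 0 m1) (hy : 0 ≤ y) (hD : (1-p)*(b+y) < m1+m2)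
    (hbr : ∀ x ∈ Icc 0 m1, r1 m1 m2 0 p x y ≤ r1 m1 m2 0 p b y) :
    marginal m1 m2 p b y ≤ 0 := by
  have hq : 0 < 1 - p := sub_pos.2 hp1
  refine nonpos_of_eventually_le_mul (A := curvature m1 m2 p b y) ?_
  filter_upwards [Ioo_mem_nhdsGT (sub_pos.2 hb.2),
    Ioo_mem_nhdsGT (div_pos (sub_pos.2 hD) hq)] with ε ⟨hε, hεm⟩ ⟨_, hεD⟩
  rw [lt_div_iff₀ hq] at hεD
  have hDε : (1-p)*(b + ε + y) < m1+m2 := by linarith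
  have h := (r1_le_r1_iff hm1 hm2 hp1 (by linarith [hb.1]) hb.1 hy hDε hD).1
    (hbr _ ⟨by linarith [hb.1], by linarith⟩)
  exact le_of_mul_le_mul_right (by linear_combination h) hε

end BestResponse

section Marginal

variable {m1 m2 p y : ℝ}

theorem marginal_self_neg (hm1 : 0 < m1) (hm2 : 0 < m2) (hp0 : 0 ≤ p) (hp1 : p < 1)
    (hy : y ∈ Icc 0 m2) (hD : (1-p)*(m1+y) < m1+m2) : marginal m1 m2 p m1 y < 0 := by
  have hR : 0 < m2 - (1-p)*y := by
    rcases hp0.eq_or_lt with rfl | hp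
    · linarith
    · nlinarith [mul_nonneg (sub_pos.2 hp1).le (sub_nonneg.2 hy.2), mul_pos hp hm2]
  have hpy : 0 ≤ (m2 - (1-p)*y) - p*y := by nlinarith [hy.2]
  have key : marginal m1 m2 p m1 y
      = -((m2-(1-p)*y)*((1-p)*m1*y+m1^2) + (1-p)*y^2*((m2-(1-p)*y) - p*y)
          + m1*p^2*y^2 + p*m1^3) := by
    unfold marginal; ring
  have := hy.1
  have := sub_nonneg.2 hp1.le
  rw [key, neg_neg_iff_pos]
  positivity

theorem marginal_add_marginal (m1 m2 p y1 y2 : ℝ) :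
    marginal m1 m2 p y1 y2 + marginal m2 m1 p y2 y1 =
      ((1-p)*(y1+y2) - (m1+m2)) * ((y1+y2)^2 - m1*m2) := by
  unfold marginal; ring

theorem marginal_zero_right (m1 m2 p y : ℝ) :
    marginal m2 m1 p y 0 = m2 * (m1*m2 - (p*y^2 + 2*m1*y)) := by
  unfold marginal; ring

theorem marginal_zero_pos_iff (hm1 : 0 < m1) (hp0 : 0 ≤ p) (hp1 : p < 1) (hy : 0 < y)
    (hroot : p*y^2 + 2*m1*y = m1*m2) :
    0 < marginal m1 m2 p 0 y ↔ (1-p)^2*m2 < 4*m1 := by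
  have hq : 0 < 1 - p := sub_pos.2 hp1
  set C := (2*m1 + (p^2+p+2)*y)*(2*m1 + p*(1-p)*y) + p*(1+p)*(p^2-p+2)*y^2
  have hB : 0 < 2*m1 + p*(1-p)*y := by
    nlinarith [mul_nonneg (mul_nonneg hp0 hq.le) hy.le]
  have hC : 0 < y * C := by
    refine mul_pos hy (add_pos_of_pos_of_nonneg (mul_pos ?_ hB) ?_)
    · nlinarith [mul_nonneg (add_nonneg (sq_nonneg p) hp0) hy.le]
    · exact mul_nonneg (mul_nonneg (mul_nonneg hp0 (by linarith)) (by nlinarith)) (sq_nonneg y)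
  have h1 : 4*m1*marginal m1 m2 p 0 y = (2*m1 - (1-p)*y) * (y*C) := by
    unfold marginal; linear_combination 4*((1-p)*y^2 - m1^2 - m1*(1+p)*y) * hroot
  have h2 : (2*m1 - (1-p)*y) * (2*m1 + p*(1-p)*y) = m1*(4*m1 - (1-p)^2*m2) := by
    linear_combination (-(1-p)^2) * hroot
  rw [← mul_pos_iff_of_pos_left (by positivity : (0:ℝ) < 4*m1), h1, mul_pos_iff_of_pos_right hC,
    ← mul_pos_iff_of_pos_right hB, h2,
    mul_pos_iff_of_pos_left hm1, sub_pos]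

end Marginal

-- With `a = √m1` and `b = √m2`, player 1's power in the interior equilibrium.
noncomputable def interiorNash (a b p : ℝ) : ℝ :=
  a*b*(2*a - (1-p)*b) / ((1+p)*(a+b))

section Interior

variable {a b p y : ℝ}

theorem marginal_sq_sq_mul_sub (a b p y : ℝ) :
    marginal (a^2) (b^2) p y (a*b - y) =
      ((1+p)*(a+b)*y - a*b*(2*a - (1-p)*b)) * ((b-a)*y - a*b^2) := by
  unfold marginal; ring

theorem interiorNash_add (ha : 0 < a) (hb : 0 < b) (hp0 : 0 ≤ p) :
    interiorNash a b p + interiorNash b a p = a*b := by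
  unfold interiorNash
  field_simp
  ring

theorem interiorNash_lt (ha : 0 < a) (hb : 0 < b) (hp0 : 0 ≤ p) (hp1 : p < 1) :
    interiorNash a b p < a^2 := by
  rw [interiorNash, div_lt_iff₀ (by positivity)]
  have hkey : 0 < (1+p)*a^2 - (1-p)*a*b + (1-p)*b^2 := by
    nlinarith [sq_nonneg (2*(1+p)*a - (1-p)*b),
      mul_pos (mul_pos (sub_pos.2 hp1) (by linarith : (0:ℝ) < 3+5*p)) (mul_pos hb hb)]
  nlinarith [mul_pos ha hkey]

theorem interiorNash_pos_iff {m1 m2 : ℝ} (hm1 : 0 < m1) (hm2 : 0 < m2) (hp0 : 0 ≤ p)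
    (hp1 : p < 1) : 0 < interiorNash (√m1) (√m2) p ↔ (1-p)^2*m2 < 4*m1 := by
  have ha := Real.sqrt_pos.2 hm1
  have hb := Real.sqrt_pos.2 hm2
  rw [interiorNash, div_pos_iff_of_pos_right (by positivity), mul_pos_iff_of_pos_left (by positivity),
    sub_pos, ← pow_lt_pow_iff_left₀ (by nlinarith) (by positivity) two_ne_zero, mul_pow, mul_pow,
    Real.sq_sqrt hm1.le, Real.sq_sqrt hm2.le]
  norm_num

theorem eq_interiorNash_of_marginal_eq_zero (ha : 0 < a) (hb : 0 < b) (hp0 : 0 ≤ p)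
    (hy : y ∈ Icc 0 (a^2)) (h : marginal (a^2) (b^2) p y (a*b - y) = 0) :
    y = interiorNash a b p := by
  have hneg : (b-a)*y - a*b^2 < 0 := by
    rcases le_or_gt a b with hab | hab
    · nlinarith [mul_nonneg (sub_nonneg.2 hab) (sub_nonneg.2 hy.2),
        mul_nonneg ha.le (sq_nonneg (a-b)), mul_pos (mul_pos ha ha) hb]
    · nlinarith [mul_nonneg hy.1 (sub_nonneg.2 hab.le), mul_pos (mul_pos ha hb) hb]
  rw [marginal_sq_sq_mul_sub, mul_eq_zero, or_iff_left hneg.ne, sub_eq_zero] at h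
  rw [interiorNash, eq_div_iff (by positivity), ← h]
  ring

theorem marginal_interiorNash (ha : 0 < a) (hb : 0 < b) (hp0 : 0 ≤ p) :
    marginal (a^2) (b^2) p (interiorNash a b p) (interiorNash b a p) = 0 := by
  rw [eq_sub_of_add_eq' (interiorNash_add ha hb hp0), marginal_sq_sq_mul_sub, interiorNash,
    mul_div_cancel₀ _ (by positivity), sub_self, zero_mul]

end Interior

namespace IsNash

variable {m1 m2 p y1 y2 : ℝ}

theorem add_lt (hm1 : 0 < m1) (hm2 : 0 < m2) (hp0 : 0 ≤ p)
    (hN : IsNash m1 m2 0 p y1 y2) : (1-p)*(y1+y2) < m1+m2 := by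
  obtain ⟨⟨hy10, hy1⟩, ⟨hy20, hy2⟩, hbr1, -⟩ := hN
  by_contra! hD
  -- the denominator of `r1` vanishes, and `x / 0 = 0`
  have hzero : r1 m1 m2 0 p y1 y2 = 0 := by
    rw [r1, show m1 + m2 + 0 - (1-p)*(y1+y2) = 0 by nlinarith, zero_mul, div_zero]
  have hpos : 0 < r1 m1 m2 0 p 0 y2 := by
    rw [r1]
    apply div_pos
    · nlinarith [mul_nonneg (mul_nonneg hp0 hm2.le) hy20, mul_pos hm1 hm2]
    · apply mul_pos <;> nlinarith [mul_pos hm1 hm2]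
  linarith [hbr1 0 ⟨le_rfl, hm1.le⟩]

theorem fst_lt (hm1 : 0 < m1) (hm2 : 0 < m2) (hp0 : 0 ≤ p) (hp1 : p < 1)
    (hN : IsNash m1 m2 0 p y1 y2) : y1 < m1 := by
  refine lt_of_le_of_ne hN.1.2 fun h => ?_
  have hD := hN.add_lt hm1 hm2 hp0
  obtain ⟨-, hy2, hbr1, -⟩ := hN
  subst h
  have := marginal_nonneg_of_forall_r1_le hm1 hm2 hp1 hm1 hy2.1 hD le_rfl hbr1
  linarith [marginal_self_neg hm1 hm2 hp0 hp1 hy2 hD]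

theorem marginal_fst_nonpos (hm1 : 0 < m1) (hm2 : 0 < m2) (hp0 : 0 ≤ p) (hp1 : p < 1)
    (hN : IsNash m1 m2 0 p y1 y2) : marginal m1 m2 p y1 y2 ≤ 0 :=
  marginal_nonpos_of_forall_r1_le hm1 hm2 hp1 ⟨hN.1.1, hN.fst_lt hm1 hm2 hp0 hp1⟩ hN.2.1.1
    (hN.add_lt hm1 hm2 hp0) hN.2.2.1

theorem marginal_fst_eq_zero (hm1 : 0 < m1) (hm2 : 0 < m2) (hp0 : 0 ≤ p) (hp1 : p < 1)
    (hN : IsNash m1 m2 0 p y1 y2) (hy1 : 0 < y1) : marginal m1 m2 p y1 y2 = 0 :=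
  (hN.marginal_fst_nonpos hm1 hm2 hp0 hp1).antisymm <|
    marginal_nonneg_of_forall_r1_le hm1 hm2 hp1 hy1 hN.2.1.1 (hN.add_lt hm1 hm2 hp0)
      hN.1.2 hN.2.2.1

theorem root_of_fst_eq_zero (hm1 : 0 < m1) (hm2 : 0 < m2) (hp0 : 0 ≤ p) (hp1 : p < 1)
    (hN : IsNash m1 m2 0 p 0 y2) : 0 < y2 ∧ p*y2^2 + 2*m1*y2 = m1*m2 := by
  have hN' := isNash_comm.1 hN
  have hy2 : 0 < y2 := by
    refine lt_of_le_of_ne hN.2.1.1 fun h => ?_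
    have := hN'.marginal_fst_nonpos hm2 hm1 hp0 hp1
    rw [← h, marginal_zero_right] at this
    nlinarith [mul_pos (mul_pos hm1 hm2) hm2]
  have h := hN'.marginal_fst_eq_zero hm2 hm1 hp0 hp1 hy2
  rw [marginal_zero_right, mul_eq_zero, or_iff_right hm2.ne', sub_eq_zero] at h
  exact ⟨hy2, h.symm⟩

theorem four_mul_le_of_fst_eq_zero (hm1 : 0 < m1) (hm2 : 0 < m2) (hp0 : 0 ≤ p) (hp1 : p < 1)
    (hN : IsNash m1 m2 0 p 0 y2) : 4*m1 ≤ (1-p)^2*m2 := by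
  obtain ⟨hy2, hroot⟩ := hN.root_of_fst_eq_zero hm1 hm2 hp0 hp1
  rw [← not_lt, ← marginal_zero_pos_iff hm1 hp0 hp1 hy2 hroot, not_lt]
  exact hN.marginal_fst_nonpos hm1 hm2 hp0 hp1

theorem eq_interiorNash (hm1 : 0 < m1) (hm2 : 0 < m2) (hp0 : 0 ≤ p) (hp1 : p < 1)
    (hN : IsNash m1 m2 0 p y1 y2) (hy1 : 0 < y1) (hy2 : 0 < y2) :
    y1 = interiorNash (√m1) (√m2) p ∧ y2 = interiorNash (√m2) (√m1) p := by
  have ha := Real.sqrt_pos.2 hm1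
  have hb := Real.sqrt_pos.2 hm2
  have hN' := isNash_comm.1 hN
  have h1 := hN.marginal_fst_eq_zero hm1 hm2 hp0 hp1 hy1
  have h2 := hN'.marginal_fst_eq_zero hm2 hm1 hp0 hp1 hy2
  have hsum : y1 + y2 = √m1 * √m2 := by
    have h := marginal_add_marginal m1 m2 p y1 y2
    rw [h1, h2, add_zero, eq_comm, mul_eq_zero,
      or_iff_right (by linarith [hN.add_lt hm1 hm2 hp0]), sub_eq_zero,
      ← Real.sq_sqrt hm1.le, ← Real.sq_sqrt hm2.le, ← mul_pow] at h
    exact (pow_left_inj₀ (by linarith) (by positivity) two_ne_zero).1 h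
  rw [← Real.sq_sqrt hm1.le, ← Real.sq_sqrt hm2.le] at h1 h2 hN
  constructor
  · refine eq_interiorNash_of_marginal_eq_zero ha hb hp0 hN.1 ?_
    rwa [← eq_sub_of_add_eq' hsum]
  · refine eq_interiorNash_of_marginal_eq_zero hb ha hp0 hN.2.1 ?_
    rwa [mul_comm, ← eq_sub_of_add_eq hsum]

theorem fst_eq_zero (hm1 : 0 < m1) (hm2 : 0 < m2) (hp0 : 0 ≤ p) (hp1 : p < 1)
    (hreg : 4*m1 ≤ (1-p)^2*m2) (hN : IsNash m1 m2 0 p y1 y2) : y1 = 0 := by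
  by_contra h
  have hy1 : 0 < y1 := lt_of_le_of_ne hN.1.1 (Ne.symm h)
  rcases hN.2.1.1.eq_or_lt with hy2 | hy2
  · rw [← hy2] at hN
    have := (isNash_comm.1 hN).four_mul_le_of_fst_eq_zero hm2 hm1 hp0 hp1
    nlinarith [mul_nonneg (sub_pos.2 hp1).le hp0]
  · have hx := (hN.eq_interiorNash hm1 hm2 hp0 hp1 hy1 hy2).1 ▸ hy1
    linarith [(interiorNash_pos_iff hm1 hm2 hp0 hp1).1 hx]

theorem eq_interiorNash_of_lt (hm1 : 0 < m1) (hm2 : 0 < m2) (hp0 : 0 ≤ p) (hp1 : p < 1)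
    (hreg1 : (1-p)^2*m2 < 4*m1) (hreg2 : (1-p)^2*m1 < 4*m2) (hN : IsNash m1 m2 0 p y1 y2) :
    y1 = interiorNash (√m1) (√m2) p ∧ y2 = interiorNash (√m2) (√m1) p := by
  have hN' := isNash_comm.1 hN
  have hy1 : 0 < y1 := lt_of_le_of_ne hN.1.1 fun h => by
    rw [← h] at hN
    linarith [hN.four_mul_le_of_fst_eq_zero hm1 hm2 hp0 hp1]
  have hy2 : 0 < y2 := lt_of_le_of_ne hN.2.1.1 fun h => by
    rw [← h] at hN'
    linarith [hN'.four_mul_le_of_fst_eq_zero hm2 hm1 hp0 hp1]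
  exact hN.eq_interiorNash hm1 hm2 hp0 hp1 hy1 hy2

end IsNash

section Equilibria

variable {m1 m2 p y : ℝ}

theorem existsUnique_pos_root (hm1 : 0 < m1) (hm2 : 0 < m2) (hp0 : 0 ≤ p) :
    ∃! y, 0 < y ∧ p*y^2 + 2*m1*y = m1*m2 := by
  obtain ⟨R, hR0, hR⟩ : ∃ R, 0 ≤ R ∧ R^2 = m1^2 + p*m1*m2 :=
    ⟨_, Real.sqrt_nonneg _, Real.sq_sqrt (by positivity)⟩
  have hw : 0 < m1*m2 / (m1 + R) := by positivity
  have hwr : p*(m1*m2 / (m1 + R))^2 + 2*m1*(m1*m2 / (m1 + R)) = m1*m2 := by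
    field_simp
    linear_combination (-1) * hR
  refine ⟨_, ⟨hw, hwr⟩, fun z ⟨hz, hzr⟩ => ?_⟩
  have h : (z - m1*m2 / (m1 + R)) * (p*(z + m1*m2 / (m1 + R)) + 2*m1) = 0 := by
    linear_combination hzr - hwr
  rw [mul_eq_zero, sub_eq_zero] at h
  exact h.resolve_right (by nlinarith [mul_nonneg hp0 (add_pos hz hw).le])

theorem isNash_zero_of_root (hm1 : 0 < m1) (hm2 : 0 < m2) (hp0 : 0 ≤ p) (hp1 : p < 1)
    (hreg : 4*m1 ≤ (1-p)^2*m2) (hy : 0 < y) (hroot : p*y^2 + 2*m1*y = m1*m2) :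
    IsNash m1 m2 0 p 0 y := by
  have hym : y < m2 := by nlinarith [mul_nonneg hp0 (sq_nonneg y)]
  have hG1 : marginal m1 m2 p 0 y ≤ 0 := by
    rw [← not_lt, marginal_zero_pos_iff hm1 hp0 hp1 hy hroot, not_lt]
    exact hreg
  have hG2 : marginal m2 m1 p y 0 = 0 := by
    rw [marginal_zero_right, hroot, sub_self, mul_zero]
  refine ⟨⟨le_rfl, hm1.le⟩, ⟨hy.le, hym.le⟩,
    r1_le_of_marginal_mul_nonpos hm1 hm2 hp0 hp1 ⟨le_rfl, hm1.le⟩ hy.le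
      (by nlinarith [mul_nonneg hp0 hy.le]) fun x hx => ?_, fun x hx => ?_⟩
  · exact mul_nonpos_of_nonpos_of_nonneg hG1 (by linarith [hx.1])
  · rw [r2_eq_r1, r2_eq_r1]
    refine r1_le_of_marginal_mul_nonpos hm2 hm1 hp0 hp1 ⟨hy.le, hym.le⟩ le_rfl (by simpa using hm1)
      (fun z _ => by rw [hG2, zero_mul]) x hx

theorem isNash_interiorNash (hm1 : 0 < m1) (hm2 : 0 < m2) (hp0 : 0 ≤ p) (hp1 : p < 1)
    (hreg1 : (1-p)^2*m2 < 4*m1) (hreg2 : (1-p)^2*m1 < 4*m2) :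
    IsNash m1 m2 0 p (interiorNash (√m1) (√m2) p) (interiorNash (√m2) (√m1) p) := by
  have ha := Real.sqrt_pos.2 hm1
  have hb := Real.sqrt_pos.2 hm2
  have hx1 := (interiorNash_pos_iff hm1 hm2 hp0 hp1).2 hreg1
  have hx2 := (interiorNash_pos_iff hm2 hm1 hp0 hp1).2 hreg2
  have hx1m := interiorNash_lt ha hb hp0 hp1
  have hx2m := interiorNash_lt hb ha hp0 hp1
  have hG1 := marginal_interiorNash ha hb hp0
  have hG2 := marginal_interiorNash hb ha hp0
  simp only [Real.sq_sqrt hm1.le, Real.sq_sqrt hm2.le] at hx1m hx2m hG1 hG2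
  refine ⟨⟨hx1.le, hx1m.le⟩, ⟨hx2.le, hx2m.le⟩,
    r1_le_of_marginal_mul_nonpos hm1 hm2 hp0 hp1 ⟨hx1.le, hx1m.le⟩ hx2.le
      (by nlinarith [mul_nonneg hp0 hx2.le]) fun x _ => by rw [hG1, zero_mul], fun x hx => ?_⟩
  rw [r2_eq_r1, r2_eq_r1]
  exact r1_le_of_marginal_mul_nonpos hm2 hm1 hp0 hp1 ⟨hx2.le, hx2m.le⟩ hx1.le
    (by nlinarith [mul_nonneg hp0 hx1.le]) (fun z _ => by rw [hG2, zero_mul]) x hx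

theorem existsUnique_isNash_of_le (hm1 : 0 < m1) (hm2 : 0 < m2) (hp0 : 0 ≤ p)
    (hp1 : p < 1) (hreg : 4*m1 ≤ (1-p)^2*m2) : ∃! q : ℝ × ℝ, IsNash m1 m2 0 p q.1 q.2 := by
  obtain ⟨y, ⟨hy, hroot⟩, huniq⟩ := existsUnique_pos_root hm1 hm2 hp0
  refine ⟨(0, y), isNash_zero_of_root hm1 hm2 hp0 hp1 hreg hy hroot,
    fun q (hq : IsNash m1 m2 0 p q.1 q.2) => ?_⟩
  have h1 := hq.fst_eq_zero hm1 hm2 hp0 hp1 hreg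
  rw [h1] at hq
  exact Prod.ext h1 (huniq _ (hq.root_of_fst_eq_zero hm1 hm2 hp0 hp1))

end Equilibria

theorem sqrt_mul_le_add_div_two {a b : ℝ} (ha : 0 ≤ a) (hb : 0 ≤ b) : √(a*b) ≤ (a+b)/2 := by
  rw [Real.sqrt_le_left (by positivity)]
  nlinarith [sq_nonneg (a-b)]

theorem sqrt_mul_eq_add_div_two_iff {a b : ℝ} (ha : 0 ≤ a) (hb : 0 ≤ b) :
    √(a*b) = (a+b)/2 ↔ a = b := by
  rw [Real.sqrt_eq_iff_eq_sq (by positivity) (by positivity)]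
  constructor
  · intro h
    nlinarith [sq_nonneg (a-b)]
  · rintro rfl
    ring

theorem stmt10 (m1 m2 p : ℝ) (hm1 : 0 < m1) (hm2 : 0 < m2)
    (hp0 : 0 ≤ p) (hp1 : p < 1) :
    (m1 ≤ (1-p)^2*m2/4 →
      (∃! q : ℝ × ℝ, IsNash m1 m2 0 p q.1 q.2) ∧
      (∀ y1 y2 : ℝ, IsNash m1 m2 0 p y1 y2 → y1 = 0)) ∧
    (m2 ≤ (1-p)^2*m1/4 →
      (∃! q : ℝ × ℝ, IsNash m1 m2 0 p q.1 q.2) ∧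
      (∀ y1 y2 : ℝ, IsNash m1 m2 0 p y1 y2 → y2 = 0)) ∧
    (¬ m1 ≤ (1-p)^2*m2/4 → ¬ m2 ≤ (1-p)^2*m1/4 →
      let x1s : ℝ := Real.sqrt (m1*m2) * (2*Real.sqrt m1 - (1-p)*Real.sqrt m2) /
        ((1+p)*(Real.sqrt m1 + Real.sqrt m2))
      let x2s : ℝ := Real.sqrt (m1*m2) * (2*Real.sqrt m2 - (1-p)*Real.sqrt m1) /
        ((1+p)*(Real.sqrt m1 + Real.sqrt m2))
      IsNash m1 m2 0 p x1s x2s ∧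
      (∀ y1 y2 : ℝ, IsNash m1 m2 0 p y1 y2 → y1 = x1s ∧ y2 = x2s) ∧
      x1s + x2s = Real.sqrt (m1*m2) ∧
      x1s + x2s ≤ (m1 + m2)/2 ∧
      (x1s + x2s = (m1 + m2)/2 ↔ m1 = m2)) := by
  refine ⟨fun hreg => ⟨existsUnique_isNash_of_le hm1 hm2 hp0 hp1 (by linarith),
      fun y1 y2 hN => hN.fst_eq_zero hm1 hm2 hp0 hp1 (by linarith)⟩,
    fun hreg => ⟨?_, fun y1 y2 hN => (isNash_comm.1 hN).fst_eq_zero hm2 hm1 hp0 hp1 (by linarith)⟩,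
    fun hreg1 hreg2 => ?_⟩
  · obtain ⟨q, hq, huniq⟩ := existsUnique_isNash_of_le hm2 hm1 hp0 hp1 (by linarith)
    exact ⟨q.swap, isNash_comm.2 hq, fun r hr => by rw [← huniq r.swap (isNash_comm.1 hr)]; rfl⟩
  intro x1s x2s
  have e1 : x1s = interiorNash (√m1) (√m2) p := by
    simp only [x1s, interiorNash, Real.sqrt_mul hm1.le]
  have e2 : x2s = interiorNash (√m2) (√m1) p := by
    simp only [x2s, interiorNash, Real.sqrt_mul hm1.le]
    ring
  have hsum : x1s + x2s = √(m1*m2) := by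
    rw [e1, e2, interiorNash_add (Real.sqrt_pos.2 hm1) (Real.sqrt_pos.2 hm2) hp0,
      Real.sqrt_mul hm1.le]
  rw [not_le] at hreg1 hreg2
  rw [hsum, e1, e2]
  exact ⟨isNash_interiorNash hm1 hm2 hp0 hp1 (by linarith) (by linarith),
    fun y1 y2 hN => hN.eq_interiorNash_of_lt hm1 hm2 hp0 hp1 (by linarith) (by linarith), rfl,
    sqrt_mul_le_add_div_two hm1.le hm2.le, sqrt_mul_eq_add_div_two_iff hm1.le hm2.le⟩
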